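/- arXiv:2008.11661 — 2 statements merged into one kernel-verified Lean document; each statement's English description precedes it below -/
import Mathlib

section
/- Lagrange inversion corollary: let G(x) be a formal power series with G(0) invertible, and let R(x) be the unique power series solution of R(x) = x·G(R(x)). If H(x) is any formal power series and a_n := [x^n](H(x)·G(x)^n), then Σ_{n≥0} a_n x^n = H(R(x)) / (1 - x·G'(R(x))). -/
/-!
Write `R = X * V` with `V = G(R)`. For every power series `F` one has
`[xᴺ] F(R) · V⁻ᴺ⁻¹ · R' = [xᴺ] F`: for `F = xᵏ` the left side is the residue of `R' / R^(N+1-k)`,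
which is `1` for `k = N` and `0` otherwise, because `R' / R^(j+1)` is a derivative for `j ≥ 1`.
Taking `F = H Gᴺ` gives `F(R) = H(R) Vᴺ`, so `[xᴺ](H Gᴺ) = [xᴺ] H(R) R' / V`, and differentiating
`R = X G(R)` shows `R' / V = 1 / (1 - X G'(R))`.
-/

open PowerSeries Finset

/-- Composition `f(g(X))` of formal power series (meaningful when `g` has zero
constant term). -/
noncomputable def pcomp (f g : ℚ⟦X⟧) : ℚ⟦X⟧ :=
  PowerSeries.mk fun n => ∑ k ∈ Finset.range (n + 1),
    PowerSeries.coeff (R := ℚ) k f * PowerSeries.coeff (R := ℚ) n (g ^ k)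

/-- Division of a power series by `X` (dropping the constant term). -/
noncomputable def shiftDiv (f : ℚ⟦X⟧) : ℚ⟦X⟧ :=
  PowerSeries.mk fun n => PowerSeries.coeff (R := ℚ) (n + 1) f

theorem pcomp_eq_subst {f g : ℚ⟦X⟧} (hg : constantCoeff g = 0) : pcomp f g = f.subst g := by
  ext n
  have hsupp : Function.support (fun k ↦ coeff k f • coeff n (g ^ k)) ⊆ range (n + 1) := by
    intro k hk
    by_contra hkn
    have hnk : (n : ℕ∞) < k := by simpa using hkn
    exact hk <| by
      simp [coeff_of_lt_order n (hnk.trans_le (le_order_pow_of_constantCoeff_eq_zero k hg))]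
  rw [coeff_subst' (HasSubst.of_constantCoeff_zero' hg), finsum_eq_sum_of_support_subset _ hsupp]
  simp [pcomp]

section Residue

variable {K : Type*} [Field K] {V : K⟦X⟧}

theorem pow_mul_inv_pow_add (hV : constantCoeff V ≠ 0) (k d : ℕ) :
    V ^ k * V⁻¹ ^ (d + k) = V⁻¹ ^ d := by
  rw [pow_add, mul_left_comm, ← mul_pow, PowerSeries.mul_inv_cancel V hV, one_pow, mul_one]

theorem coeff_inv_pow_mul_derivative_X_mul [CharZero K] (hV : constantCoeff V ≠ 0) (d : ℕ) :
    coeff d (V⁻¹ ^ (d + 1) * d⁄dX K (X * V)) = if d = 0 then 1 else 0 := by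
  have hdXV : d⁄dX K (X * V) = X * d⁄dX K V + V := by
    simp [Derivation.leibniz, smul_eq_mul]
  rcases d with _ | m
  · simp [hdXV, hV]
  -- `(X V)' / V^(m+2) = X V' / V^(m+2) + 1 / V^(m+1)`, and `V' / V^(m+2)` is a multiple of
  -- `(1 / V^(m+1))'`, whose `m`-th coefficient is `(m+1)` times the `(m+1)`-st one of `1 / V^(m+1)`.
  have hsplit : V⁻¹ ^ (m + 2) * d⁄dX K (X * V) =
      X * (V⁻¹ ^ (m + 2) * d⁄dX K V) + V⁻¹ ^ (m + 1) := by
    rw [hdXV]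
    linear_combination V⁻¹ ^ (m + 1) * PowerSeries.mul_inv_cancel V hV
  have hderiv : d⁄dX K (V⁻¹ ^ (m + 1)) = -((m + 1) • (V⁻¹ ^ (m + 2) * d⁄dX K V)) := by
    rw [Derivation.leibniz_pow, derivative_inv', Nat.add_sub_cancel, smul_eq_mul, ← smul_neg]
    ring_nf
  have hcoeff := congrArg (coeff m) hderiv
  rw [coeff_derivative, map_neg, map_nsmul, nsmul_eq_mul] at hcoeff
  push_cast at hcoeff
  have hm : (m + 1 : K) ≠ 0 := by exact_mod_cast m.succ_ne_zero
  have hc : coeff (m + 1) (V⁻¹ ^ (m + 1)) = -coeff m (V⁻¹ ^ (m + 2) * d⁄dX K V) :=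
    mul_right_cancel₀ hm (by linear_combination hcoeff)
  rw [hsplit, map_add, coeff_succ_X_mul, if_neg m.succ_ne_zero]
  linear_combination hc

theorem coeff_X_mul_pow_mul_inv_pow_mul_derivative [CharZero K] (hV : constantCoeff V ≠ 0)
    (k N : ℕ) :
    coeff N ((X * V) ^ k * (V⁻¹ ^ (N + 1) * d⁄dX K (X * V))) = if k = N then 1 else 0 := by
  rw [mul_pow, mul_assoc, coeff_X_pow_mul']
  by_cases hkN : k ≤ N
  · rw [if_pos hkN]
    obtain ⟨d, rfl⟩ := Nat.exists_eq_add_of_le' hkN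
    rw [← mul_assoc, add_right_comm, pow_mul_inv_pow_add hV, Nat.add_sub_cancel,
      coeff_inv_pow_mul_derivative_X_mul hV]
    simp
  · rw [if_neg hkN, if_neg (by omega)]

theorem coeff_subst_X_mul_mul_inv_pow_mul_derivative [CharZero K] (hV : constantCoeff V ≠ 0)
    (F : K⟦X⟧) (N : ℕ) :
    coeff N (F.subst (X * V) * (V⁻¹ ^ (N + 1) * d⁄dX K (X * V))) = coeff N F := by
  have hXV : HasSubst (X * V) := HasSubst.of_constantCoeff_zero' (by simp)
  have htail : coeff N ((X * V) ^ (N + 1) * (mk fun i ↦ coeff (i + (N + 1)) F).subst (X * V) *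
      (V⁻¹ ^ (N + 1) * d⁄dX K (X * V))) = 0 := by
    rw [mul_pow, mul_assoc, mul_assoc, coeff_X_pow_mul', if_neg (by omega)]
  have hhead : coeff N ((trunc (N + 1) F : K⟦X⟧).subst (X * V) *
      (V⁻¹ ^ (N + 1) * d⁄dX K (X * V))) = coeff N F := by
    rw [subst_coe hXV, Polynomial.aeval_eq_sum_range' (natDegree_trunc_lt F N), sum_mul, map_sum]
    simp only [smul_mul_assoc, coeff_smul, coeff_X_mul_pow_mul_inv_pow_mul_derivative hV,
      smul_eq_mul, mul_ite, mul_one, mul_zero, sum_ite_eq', mem_range, lt_add_one, if_true]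
    simp [coeff_trunc]
  conv_lhs => rw [eq_X_pow_mul_shift_add_trunc (N + 1) F]
  rw [subst_add hXV, subst_mul hXV, subst_pow hXV, subst_X hXV, add_mul, map_add, htail,
    zero_add, hhead]

end Residue

/-- Lagrange inversion corollary: if `G(0)` is invertible and `R = x·G(R(x))`
with `R(0) = 0`, then for any `H`, `Σ_{n≥0} ([xⁿ](H·Gⁿ))·xⁿ = H(R)/(1 - x·G'(R))`. -/
theorem lagrange_corollary (G H R : ℚ⟦X⟧)
    (hG : IsUnit (PowerSeries.constantCoeff (R := ℚ) G))
    (hR0 : PowerSeries.constantCoeff (R := ℚ) R = 0)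
    (hR : R = X * pcomp G R) :
    PowerSeries.mk (fun n => PowerSeries.coeff (R := ℚ) n (H * G ^ n)) =
      pcomp H R * (1 - X * pcomp (d⁄dX ℚ G) R)⁻¹ := by
  have hRs : HasSubst R := HasSubst.of_constantCoeff_zero' hR0
  have hV : constantCoeff (pcomp G R) ≠ 0 := by simpa [pcomp] using hG.ne_zero
  simp only [pcomp_eq_subst hR0] at hR hV ⊢
  set V : ℚ⟦X⟧ := G.subst R with hVdef
  have hR' : d⁄dX ℚ R * (1 - X * (d⁄dX ℚ G).subst R) = V := by
    have h := congrArg (d⁄dX ℚ) hR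
    rw [Derivation.leibniz, derivative_X, derivative_subst hRs, smul_eq_mul, smul_eq_mul] at h
    linear_combination h
  have hinv : (1 - X * (d⁄dX ℚ G).subst R)⁻¹ = d⁄dX ℚ R * V⁻¹ := by
    rw [PowerSeries.inv_eq_iff_mul_eq_one (by simp)]
    linear_combination V⁻¹ * hR' + PowerSeries.mul_inv_cancel V hV
  ext N
  rw [coeff_mk, hinv, ← coeff_subst_X_mul_mul_inv_pow_mul_derivative hV, ← hR, subst_mul hRs,
    subst_pow hRs, ← hVdef]
  congr 1
  linear_combination H.subst R * d⁄dX ℚ R * pow_mul_inv_pow_add hV N 1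
end

section
/- Define V(x) by V(0) = 0 and V'(x) = (C(x) - x)/(2x²), where C(x) is the generating function of connected chord diagrams satisfying 2xC(x)C'(x) = C(x)² + C(x) - x and C ∈ x + x²ℚ[[x]]. Then V(x) = C(x)²/(2x). -/
open PowerSeries Finset

/-!
Writing `g = C²`, the equation for `C` reads `X g' = g + (C - X)`. Comparing coefficients of
`X^(n+2)` gives `(n + 1) [X^(n+2)] g = [X^(n+2)] (C - X)`, which says exactly that
`(g / X)' = (C - X) / X²`. Hence `V` and `g / (2X)` have the same derivative, and both vanish
at `0` because `C(0) = 0`; over `ℚ` this forces them to be equal.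
-/

theorem coeff_shiftDiv (f : ℚ⟦X⟧) (n : ℕ) : coeff n (shiftDiv f) = coeff (n + 1) f :=
  coeff_mk _ _

theorem coeff_X_mul_derivative {R : Type*} [CommSemiring R] (f : R⟦X⟧) (n : ℕ) :
    coeff n (X * d⁄dX R f) = n * coeff n f := by
  cases n with
  | zero => simp
  | succ n => rw [coeff_succ_X_mul, coeff_derivative, mul_comm]; push_cast; rfl

theorem derivative_shiftDiv_of_X_mul_derivative_eq {g h : ℚ⟦X⟧}
    (hgh : X * d⁄dX ℚ g = g + h) : d⁄dX ℚ (shiftDiv g) = shiftDiv (shiftDiv h) := by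
  ext n
  have hcoeff := congrArg (coeff (n + 2)) hgh
  rw [coeff_X_mul_derivative, map_add] at hcoeff
  rw [coeff_derivative, coeff_shiftDiv, coeff_shiftDiv, coeff_shiftDiv]
  push_cast at hcoeff
  linarith

theorem coeff_one_sq_eq_zero {R : Type*} [CommSemiring R] {f : R⟦X⟧}
    (hf : constantCoeff f = 0) : coeff 1 (f ^ 2) = 0 :=
  X_pow_dvd_iff.mp (pow_dvd_pow_of_dvd (X_dvd_iff.mpr hf) 2) 1 one_lt_two

theorem vacuum_generating_function_general (C V : ℚ⟦X⟧)
    (hC0 : PowerSeries.constantCoeff (R := ℚ) C = 0)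
    (hode : 2 * X * C * d⁄dX ℚ C = C ^ 2 + C - X)
    (hV0 : PowerSeries.constantCoeff (R := ℚ) V = 0)
    (hV : d⁄dX ℚ V = PowerSeries.C (R := ℚ) (1 / 2) * shiftDiv (shiftDiv (C - X))) :
    V = PowerSeries.C (R := ℚ) (1 / 2) * shiftDiv (C ^ 2) := by
  have hsq : X * d⁄dX ℚ (C ^ 2) = C ^ 2 + (C - X) := by
    rw [derivative_pow, ← add_sub_assoc, ← hode]
    push_cast
    ring
  refine derivative.ext ?_ ?_
  · rw [hV, Derivation.leibniz, derivative_C, smul_zero, add_zero, smul_eq_mul,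
      derivative_shiftDiv_of_X_mul_derivative_eq hsq]
  · rw [hV0, map_mul, ← coeff_zero_eq_constantCoeff_apply (shiftDiv _), coeff_shiftDiv,
      coeff_one_sq_eq_zero hC0, mul_zero]

/-- If `V(0) = 0` and `V' = (C - x)/(2x²)`, where `C` satisfies `C(0)=0`,
`C'(0)=1` and `2x·C·C' = C² + C - x`, then `V = C²/(2x)`. -/
theorem vacuum_generating_function (C V : ℚ⟦X⟧)
    (hC0 : PowerSeries.constantCoeff (R := ℚ) C = 0) (hC1 : PowerSeries.coeff (R := ℚ) 1 C = 1)
    (hode : 2 * X * C * d⁄dX ℚ C = C ^ 2 + C - X)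
    (hV0 : PowerSeries.constantCoeff (R := ℚ) V = 0)
    (hV : d⁄dX ℚ V = PowerSeries.C (R := ℚ) (1 / 2) * shiftDiv (shiftDiv (C - X))) :
    V = PowerSeries.C (R := ℚ) (1 / 2) * shiftDiv (C ^ 2) :=
  vacuum_generating_function_general C V hC0 hode hV0 hV
end
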